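/- arXiv:0907.4957 — 9 statements merged into one kernel-verified Lean document; each statement's English description precedes it below -/
import Mathlib

section
/- For every natural number n, the length of the word σ^n(B) equals f_{2n}. -/
/-- The two-letter alphabet `{B, W}`. -/
inductive BW where
  | B : BW
  | W : BW
  deriving DecidableEq

/-- The substitution `σ` determined by `σ(B) = BW` and `σ(W) = BWW`, on letters. -/
def sigmaLetter : BW → List BW
  | .B => [.B, .W]
  | .W => [.B, .W, .W]

/-- The substitution `σ` extended to words (monoid morphism of words). -/
def sigmaWord (w : List BW) : List BW := w.flatMap sigmaLetter

lemma len_sigma (w : List BW) :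
    (sigmaWord w).length = 2 * w.length + w.count BW.W := by
  induction w with
  | nil => simp [sigmaWord]
  | cons a t ih =>
    cases a <;>
      simp [sigmaWord, List.flatMap_cons, sigmaLetter, List.count_cons] at * <;> omega

lemma countW_sigma (w : List BW) :
    (sigmaWord w).count BW.W = w.length + w.count BW.W := by
  induction w with
  | nil => simp [sigmaWord]
  | cons a t ih =>
    cases a <;>
      simp [sigmaWord, List.flatMap_cons, sigmaLetter, List.count_cons, List.count_append] at * <;>
      omega

lemma key (n : ℕ) :
    (sigmaWord^[n] [BW.B]).length = Nat.fib (2 * n + 1) ∧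
    (sigmaWord^[n] [BW.B]).count BW.W = Nat.fib (2 * n) := by
  induction n with
  | zero => simp [List.count_cons]
  | succ n ih =>
    obtain ⟨h1, h2⟩ := ih
    rw [Function.iterate_succ_apply']
    constructor
    · rw [len_sigma, h1, h2, show 2 * (n + 1) + 1 = (2 * n + 1) + 1 + 1 by ring,
        Nat.fib_add_two, Nat.fib_add_two]
      ring
    · rw [countW_sigma, h1, h2, show 2 * (n + 1) = (2 * n) + 1 + 1 by ring,
        Nat.fib_add_two]; ring

/-- For every natural number `n`, the length of the word `σ^n(B)` equals `f_{2n}`,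
where `(f_n)` is the Fibonacci sequence with `f_0 = f_1 = 1`, i.e. `f_n = Nat.fib (n+1)`. -/
theorem length_sigma_iter_B (n : ℕ) :
    (sigmaWord^[n] [BW.B]).length = Nat.fib (2 * n + 1) := by
  exact (key n).1
end

section
/- For every natural number n, the number of occurrences of the letter W in the word σ^n(W) equals f_{2n}, and the number of occurrences of the letter B in σ^n(W) equals f_{2n+1} − f_{2n}. -/
lemma count_sigmaWord (w : List BW) :
    (sigmaWord w).count BW.W = w.count BW.B + 2 * w.count BW.W ∧
    (sigmaWord w).count BW.B = w.count BW.B + w.count BW.W := by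
  induction w with
  | nil => simp [sigmaWord]
  | cons a t ih =>
    have : sigmaWord (a :: t) = sigmaLetter a ++ sigmaWord t := rfl
    cases a <;> simp [this, sigmaLetter, List.count_cons, ih.1, ih.2] <;> omega

/-- For every natural number `n`, the number of occurrences of `W` in `σ^n(W)` equals
`f_{2n}`, and the number of occurrences of `B` in `σ^n(W)` equals `f_{2n+1} − f_{2n}`,
where `(f_n)` is the Fibonacci sequence with `f_0 = f_1 = 1`, i.e. `f_n = Nat.fib (n+1)`. -/
theorem count_sigma_iter_W (n : ℕ) :
    (sigmaWord^[n] [BW.W]).count BW.W = Nat.fib (2 * n + 1) ∧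
    (sigmaWord^[n] [BW.W]).count BW.B = Nat.fib (2 * n + 2) - Nat.fib (2 * n + 1) := by
  induction n with
  | zero => simp
  | succ n ih =>
    rw [Function.iterate_succ_apply']
    obtain ⟨hW, hB⟩ := ih
    obtain ⟨h1, h2⟩ := count_sigmaWord (sigmaWord^[n] [BW.W])
    rw [h1, h2, hW, hB]
    have e1 : 2 * (n + 1) + 1 = 2 * n + 3 := by ring
    have e2 : 2 * (n + 1) + 2 = 2 * n + 4 := by ring
    rw [e1, e2]
    have h3 : Nat.fib (2 * n + 2) = Nat.fib (2 * n) + Nat.fib (2 * n + 1) := by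
      exact Nat.fib_add_two
    have h4 : Nat.fib (2 * n + 3) = Nat.fib (2 * n + 1) + Nat.fib (2 * n + 2) := by
      have h := Nat.fib_add_two (n := 2 * n + 1)
      simp only [show 2 * n + 1 + 2 = 2 * n + 3 by ring,
        show 2 * n + 1 + 1 = 2 * n + 2 by ring] at h
      omega
    have h5 : Nat.fib (2 * n + 4) = Nat.fib (2 * n + 2) + Nat.fib (2 * n + 3) := by
      have h := Nat.fib_add_two (n := 2 * n + 2)
      simp only [show 2 * n + 2 + 2 = 2 * n + 4 by ring,
        show 2 * n + 2 + 1 = 2 * n + 3 by ring] at h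
      omega
    omega
end

section
/- For the Fibonacci automaton, for every natural number k and every 2-level store ω over Γ = {Z, X_1, X_2, F}, there is a finite sequence of steps leading from the configuration (q_0, a^{f_k}, (X_2, F^k)·ω) to the configuration (q_0, ε, ω), where (X_2, F^k)·ω denotes the store whose top entry is (X_2, F^k) followed by the entries of ω. -/
/-- Operations on a 2-level iterated pushdown store. -/
inductive Op (Γ : Type*) where
  | pop1 : Op Γ
  | pop2 : Op Γ
  | push1 : List Γ → Op Γ
  | push2 : List Γ → Op Γ

/-- A 2-level pushdown store: a finite list of entries `(A, s)` with `A` a letter of `Γ`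
and `s ∈ Γ*` the inner store of the entry. -/
abbrev Store (Γ : Type*) := List (Γ × List Γ)

/-- The top symbols of a 2-level store: the letter of the top entry followed by the first
letter of its inner store when that inner store is nonempty; an element of `Γ ∪ Γ²`. -/
def topsym {Γ : Type*} : Store Γ → List Γ
  | [] => []
  | (A, s) :: _ => A :: s.take 1

/-- Apply an operation to a 2-level store (a partial operation):
`pop1` removes the top entry; `pop2` removes the first letter of the inner store of the
top entry (when nonempty); `push1 w` replaces the top entry `(A, s)` by the entries
`(w_1, s), …, (w_m, s)`; `push2 u` replaces the top entry `(A, s)` by `(A, u ++ s)`. -/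
def applyOp {Γ : Type*} : Op Γ → Store Γ → Option (Store Γ)
  | .pop1, _ :: rest => some rest
  | .pop2, (A, _ :: s) :: rest => some ((A, s) :: rest)
  | .push1 w, (_, s) :: rest => some (w.map (fun x => (x, s)) ++ rest)
  | .push2 u, (A, s) :: rest => some ((A, u ++ s) :: rest)
  | _, _ => none

/-- A 2-iterated pushdown automaton with state set `Q`, input alphabet `In` and store
alphabet `Γ`: an initial state `q0`, an initial store symbol `Z`, and a transition table
`δ` assigning to each triple `(q, a, t)` — with `a ∈ In ∪ {ε}` and `t ∈ Γ ∪ Γ²` — a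
finite set (list) of instructions `(q', op)`. -/
structure IPDA2 (Q In Γ : Type*) where
  q0 : Q
  Z : Γ
  δ : Q → Option In → List Γ → List (Q × Op Γ)

/-- A configuration: current state, remaining input word, current 2-level store. -/
abbrev Config (Q In Γ : Type*) := Q × List In × Store Γ

/-- One computation step: an instruction from `δ(q, a, topsym ω)` may be applied, where
`a = ε` (no input consumed) or `a` is the first letter of the remaining input (which is
then consumed); the state changes to `q'` and the operation is applied to the store. -/
inductive IPDA2.Step {Q In Γ : Type*} (M : IPDA2 Q In Γ) :
    Config Q In Γ → Config Q In Γ → Prop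
  | eps {q q' : Q} {w : List In} {ω ω' : Store Γ} {op : Op Γ} :
      (q', op) ∈ M.δ q none (topsym ω) → applyOp op ω = some ω' →
      M.Step (q, w, ω) (q', w, ω')
  | read {q q' : Q} {a : In} {w : List In} {ω ω' : Store Γ} {op : Op Γ} :
      (q', op) ∈ M.δ q (some a) (topsym ω) → applyOp op ω = some ω' →
      M.Step (q, a :: w, ω) (q', w, ω')

/-- A finite sequence of computation steps. -/
def IPDA2.Steps {Q In Γ : Type*} (M : IPDA2 Q In Γ) :
    Config Q In Γ → Config Q In Γ → Prop :=
  Relation.ReflTransGen M.Step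

/-- Acceptance: some finite sequence of steps leads from the initial configuration
`(q0, w, [(Z, ε)])` to a configuration with empty remaining input and empty store. -/
def IPDA2.Accepts {Q In Γ : Type*} (M : IPDA2 Q In Γ) (w : List In) : Prop :=
  ∃ q : Q, M.Steps (M.q0, w, [(M.Z, [])]) (q, [], [])

/-- The states of the Fibonacci automaton. -/
inductive QF where
  | q0 : QF
  | q1 : QF
  | q2 : QF
  deriving DecidableEq

/-- The one-letter input alphabet `{a}` of the Fibonacci automaton. -/
inductive InA where
  | a : InA
  deriving DecidableEq

/-- The store alphabet `Γ = {Z, X₁, X₂, F}` of the Fibonacci automaton. -/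
inductive ΓF where
  | Z : ΓF
  | X1 : ΓF
  | X2 : ΓF
  | F : ΓF
  deriving DecidableEq

/-- The transition table of the Fibonacci automaton. -/
def fibδ : QF → Option InA → List ΓF → List (QF × Op ΓF)
  | .q0, none, [.Z] => [(.q0, .push2 [.F]), (.q0, .push1 [.X2])]
  | .q0, none, [.Z, .F] => [(.q0, .push2 [.F]), (.q0, .push1 [.X2])]
  | .q0, none, [.X1, .F] => [(.q1, .pop2)]
  | .q0, none, [.X2, .F] => [(.q2, .pop2)]
  | .q0, some .a, [.X1] => [(.q0, .pop1)]
  | .q0, some .a, [.X2] => [(.q0, .pop1)]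
  | .q1, none, [.X1, .F] => [(.q0, .push1 [.X1, .X2])]
  | .q1, none, [.X1] => [(.q0, .push1 [.X1, .X2])]
  | .q2, none, [.X2, .F] => [(.q0, .push1 [.X1])]
  | .q2, none, [.X2] => [(.q0, .push1 [.X1])]
  | _, _, _ => []

/-- The Fibonacci automaton, the 2-iterated pushdown automaton recognizing `{a^{f_n}}`. -/
def fibM : IPDA2 QF InA ΓF := ⟨.q0, .Z, fibδ⟩

/-!
An entry `(X₂, F^k)` is erased while reading `f_k` letters and an entry `(X₁, F^k)` while
reading `f_{k+1}`: popping an `F` turns `(X₂, F^{k+1})` into `(X₁, F^k)`, and `(X₁, F^{k+1})`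
into the two entries `(X₁, F^k)(X₂, F^k)`, which are then erased one after the other. This is
the recurrence `f_{k+2} = f_{k+1} + f_k`, so both facts follow by a simultaneous induction on `k`.
-/

namespace IPDA2

variable {Q In Γ : Type*} {M : IPDA2 Q In Γ}

theorem Step.append_input {c c' : Config Q In Γ} (h : M.Step c c') (v : List In) :
    M.Step (c.1, c.2.1 ++ v, c.2.2) (c'.1, c'.2.1 ++ v, c'.2.2) := by
  cases h with
  | eps hδ hop => exact .eps hδ hop
  | read hδ hop => exact .read hδ hop

theorem Steps.append_input {q q' : Q} {w w' : List In} {ω ω' : Store Γ}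
    (h : M.Steps (q, w, ω) (q', w', ω')) (v : List In) :
    M.Steps (q, w ++ v, ω) (q', w' ++ v, ω') :=
  Relation.ReflTransGen.lift (fun c : Config Q In Γ => (c.1, c.2.1 ++ v, c.2.2))
    (fun _ _ hc => Step.append_input hc v) _ _ h

end IPDA2

open List ΓF

section FibonacciAutomaton

variable {w : List InA} (ω : Store ΓF) (k : ℕ)

theorem fibM_step_read_X1 : fibM.Step (.q0, .a :: w, (X1, []) :: ω) (.q0, w, ω) :=
  .read (op := .pop1) (by simp [fibM, fibδ, topsym]) rfl

theorem fibM_step_read_X2 : fibM.Step (.q0, .a :: w, (X2, []) :: ω) (.q0, w, ω) :=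
  .read (op := .pop1) (by simp [fibM, fibδ, topsym]) rfl

theorem fibM_step_pop2_X1 :
    fibM.Step (.q0, w, (X1, replicate (k + 1) F) :: ω) (.q1, w, (X1, replicate k F) :: ω) :=
  .eps (op := .pop2) (by simp [fibM, fibδ, topsym]) rfl

theorem fibM_step_pop2_X2 :
    fibM.Step (.q0, w, (X2, replicate (k + 1) F) :: ω) (.q2, w, (X2, replicate k F) :: ω) :=
  .eps (op := .pop2) (by simp [fibM, fibδ, topsym]) rfl

theorem fibM_step_split_X1 :
    fibM.Step (.q1, w, (X1, replicate k F) :: ω)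
      (.q0, w, (X1, replicate k F) :: (X2, replicate k F) :: ω) :=
  .eps (op := .push1 [X1, X2]) (by cases k <;> simp [fibM, fibδ, topsym]) rfl

theorem fibM_step_relabel_X2 :
    fibM.Step (.q2, w, (X2, replicate k F) :: ω) (.q0, w, (X1, replicate k F) :: ω) :=
  .eps (op := .push1 [X1]) (by cases k <;> simp [fibM, fibδ, topsym]) rfl

end FibonacciAutomaton

theorem fibM_steps_X2_and_X1 (k : ℕ) (ω : Store ΓF) :
    fibM.Steps (.q0, replicate (Nat.fib (k + 1)) .a, (X2, replicate k F) :: ω) (.q0, [], ω) ∧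
    fibM.Steps (.q0, replicate (Nat.fib (k + 2)) .a, (X1, replicate k F) :: ω) (.q0, [], ω) := by
  induction k generalizing ω with
  | zero => exact ⟨.single (fibM_step_read_X2 ω), .single (fibM_step_read_X1 ω)⟩
  | succ k ih =>
    refine ⟨.head (fibM_step_pop2_X2 ω k) <| .head (fibM_step_relabel_X2 ω k) (ih ω).2,
      .head (fibM_step_pop2_X1 ω k) <| .head (fibM_step_split_X1 ω k) ?_⟩
    have hfib : replicate (Nat.fib (k + 3)) InA.a =
        replicate (Nat.fib (k + 2)) .a ++ replicate (Nat.fib (k + 1)) .a := by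
      rw [← replicate_add, Nat.fib_add_two, Nat.add_comm]
    rw [hfib]
    exact Relation.ReflTransGen.trans ((ih _).2.append_input _) (ih ω).1

/-- For the Fibonacci automaton, for every `k : ℕ` and every 2-level store `ω` over
`Γ = {Z, X₁, X₂, F}`, a finite sequence of steps leads from the configuration
`(q₀, a^{f_k}, (X₂, F^k)·ω)` to `(q₀, ε, ω)`. Here `f_k = Nat.fib (k+1)` (the Fibonacci
sequence with `f_0 = f_1 = 1`). -/
theorem fibM_steps_X2 (k : ℕ) (ω : Store ΓF) :
    fibM.Steps (QF.q0, List.replicate (Nat.fib (k + 1)) InA.a,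
        (ΓF.X2, List.replicate k ΓF.F) :: ω)
      (QF.q0, [], ω) :=
  (fibM_steps_X2_and_X1 k ω).1
end

section
/- For the Fibonacci automaton, for every natural number k and every 2-level store ω over Γ = {Z, X_1, X_2, F}, there is a finite sequence of steps leading from the configuration (q_0, a^{f_{k+1}}, (X_1, F^k)·ω) to the configuration (q_0, ε, ω), where (X_1, F^k)·ω denotes the store whose top entry is (X_1, F^k) followed by the entries of ω. -/
def Erases (X : ΓF) (k n : ℕ) : Prop :=
  ∀ ω : Store ΓF, fibM.Steps (QF.q0, List.replicate n InA.a,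
    (X, List.replicate k ΓF.F) :: ω) (QF.q0, [], ω)

theorem topsym_replicate_F (X : ΓF) (k : ℕ) (ω : Store ΓF) :
    topsym ((X, List.replicate k ΓF.F) :: ω) = if k = 0 then [X] else [X, ΓF.F] := by
  cases k <;> rfl

theorem erases_zero {X : ΓF} (hX : X = ΓF.X1 ∨ X = ΓF.X2) : Erases X 0 1 := by
  intro ω
  refine .single (.read (op := .pop1) ?_ rfl)
  rcases hX with rfl | rfl <;> simp [fibM, fibδ, topsym]

theorem erases_X2_succ {k n : ℕ} (h : Erases ΓF.X1 k n) : Erases ΓF.X2 (k + 1) n := by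
  intro ω
  have hpop : fibM.Step
      (QF.q0, List.replicate n InA.a, (ΓF.X2, List.replicate (k + 1) ΓF.F) :: ω)
      (QF.q2, List.replicate n InA.a, (ΓF.X2, List.replicate k ΓF.F) :: ω) :=
    .eps (op := .pop2) (by simp [fibM, fibδ, topsym_replicate_F]) rfl
  have hrelabel : fibM.Step
      (QF.q2, List.replicate n InA.a, (ΓF.X2, List.replicate k ΓF.F) :: ω)
      (QF.q0, List.replicate n InA.a, (ΓF.X1, List.replicate k ΓF.F) :: ω) :=
    .eps (op := .push1 [ΓF.X1]) (by rw [topsym_replicate_F]; split_ifs <;> simp [fibM, fibδ])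
      rfl
  exact .head hpop (.head hrelabel (h ω))

theorem erases_X1_succ {k m n : ℕ} (h₁ : Erases ΓF.X1 k m) (h₂ : Erases ΓF.X2 k n) :
    Erases ΓF.X1 (k + 1) (m + n) := by
  intro ω
  have hpop : fibM.Step
      (QF.q0, List.replicate (m + n) InA.a, (ΓF.X1, List.replicate (k + 1) ΓF.F) :: ω)
      (QF.q1, List.replicate (m + n) InA.a, (ΓF.X1, List.replicate k ΓF.F) :: ω) :=
    .eps (op := .pop2) (by simp [fibM, fibδ, topsym_replicate_F]) rfl
  have hsplit : fibM.Step
      (QF.q1, List.replicate (m + n) InA.a, (ΓF.X1, List.replicate k ΓF.F) :: ω)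
      (QF.q0, List.replicate (m + n) InA.a,
        (ΓF.X1, List.replicate k ΓF.F) :: (ΓF.X2, List.replicate k ΓF.F) :: ω) :=
    .eps (op := .push1 [ΓF.X1, ΓF.X2])
      (by rw [topsym_replicate_F]; split_ifs <;> simp [fibM, fibδ]) rfl
  have hfirst := (h₁ ((ΓF.X2, List.replicate k ΓF.F) :: ω)).append_input
    (List.replicate n InA.a)
  rw [List.nil_append, ← List.replicate_add] at hfirst
  exact .head hpop (.head hsplit (hfirst.trans (h₂ ω)))

theorem erases_fib (k : ℕ) :
    Erases ΓF.X1 k (Nat.fib (k + 2)) ∧ Erases ΓF.X2 k (Nat.fib (k + 1)) := by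
  induction k with
  | zero => exact ⟨erases_zero (.inl rfl), erases_zero (.inr rfl)⟩
  | succ k ih =>
    refine ⟨?_, erases_X2_succ ih.1⟩
    rw [show Nat.fib (k + 1 + 2) = Nat.fib (k + 2) + Nat.fib (k + 1) from
      Nat.fib_add_two.trans (Nat.add_comm _ _)]
    exact erases_X1_succ ih.1 ih.2

/-- For the Fibonacci automaton, for every `k : ℕ` and every 2-level store `ω` over
`Γ = {Z, X₁, X₂, F}`, a finite sequence of steps leads from the configuration
`(q₀, a^{f_{k+1}}, (X₁, F^k)·ω)` to `(q₀, ε, ω)`. Here `f_k = Nat.fib (k+1)` (the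
Fibonacci sequence with `f_0 = f_1 = 1`). -/
theorem fibM_steps_X1 (k : ℕ) (ω : Store ΓF) :
    fibM.Steps (QF.q0, List.replicate (Nat.fib (k + 2)) InA.a,
        (ΓF.X1, List.replicate k ΓF.F) :: ω)
      (QF.q0, [], ω) :=
  (erases_fib k).1 ω
end

section
/- The Fibonacci automaton accepts the word a^m if and only if m = f_n for some natural number n; that is, the language recognized by the Fibonacci automaton is exactly {a^{f_n} : n ∈ ℕ}. -/
/-!
Weigh a store entry `(X₁, F^k)` as `f_{k+1}` and `(X₂, F^k)` as `f_k`. The ε-loops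
`pop₂; push₁(X₁X₂)` and `pop₂; push₁(X₁)` rewrite `(X₁, F^{k+1})` into `(X₁, F^k)(X₂, F^k)`
and `(X₂, F^{k+1})` into `(X₁, F^k)`, which preserves the total weight by the Fibonacci
recursion, while reading a letter pops an entry `(Xᵢ, ε)` of weight `1`. Hence from a store of
`X`-entries the automaton reads exactly its weight in letters before the store is empty. Before
that, it guesses `n` by pushing `F^n` into the inner store of `Z`, then turns `Z` into `X₂`,
of weight `f_n`.
-/

namespace IPDA2

variable {Q In Γ : Type*} {M : IPDA2 Q In Γ}

theorem Steps.length_add_weight {P : Q → Store Γ → Prop} {wt : Q → Store Γ → ℕ}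
    (hstep : ∀ {q w ω q' w' ω'}, P q ω → M.Step (q, w, ω) (q', w', ω') →
      P q' ω' ∧ w.length + wt q' ω' = w'.length + wt q ω)
    {c c' : Config Q In Γ} (h : M.Steps c c') (hP : P c.1 c.2.2) :
    P c'.1 c'.2.2 ∧ c.2.1.length + wt c'.1 c'.2.2 = c'.2.1.length + wt c.1 c.2.2 := by
  induction h using Relation.ReflTransGen.head_induction_on with
  | refl => exact ⟨hP, rfl⟩
  | @head c₁ c₂ hc _ ih =>
    obtain ⟨q₁, w₁, ω₁⟩ := c₁
    obtain ⟨q₂, w₂, ω₂⟩ := c₂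
    obtain ⟨hP₂, h₁⟩ := hstep hP hc
    obtain ⟨hP', h₂⟩ := ih hP₂
    exact ⟨hP', by simp only at h₁ h₂ ⊢; omega⟩

end IPDA2

def entryWeight : ΓF → ℕ → ℕ
  | .X1, k => Nat.fib (k + 2)
  | .X2, k => Nat.fib (k + 1)
  | _, _ => 0

def storeWeight (ω : Store ΓF) : ℕ := (ω.map fun e => entryWeight e.1 e.2.length).sum

/-- In the states `q₁`, `q₂` the `F` just removed by `pop₂` is still counted. -/
def configWeight : QF → Store ΓF → ℕ
  | .q0, ω => storeWeight ω
  | _, [] => 0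
  | _, (A, s) :: rest => entryWeight A (s.length + 1) + storeWeight rest

def IsXStore (ω : Store ΓF) : Prop := ∀ e ∈ ω, e.1 = .X1 ∨ e.1 = .X2

theorem fibM_step_conserves_weight {q q' : QF} {w w' : List InA} {ω ω' : Store ΓF}
    (hω : IsXStore ω) (h : fibM.Step (q, w, ω) (q', w', ω')) :
    IsXStore ω' ∧ w.length + configWeight q' ω' = w'.length + configWeight q ω := by
  obtain _ | ⟨⟨A, s⟩, rest⟩ := ω
  · cases h <;> simp [fibM, fibδ, topsym] at *
  obtain ⟨hA, hrest⟩ := List.forall_mem_cons.mp hω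
  rcases hA with rfl | rfl <;> cases q <;> rcases s with _ | ⟨_ | _ | _ | _, s⟩ <;>
    cases h with
    | eps hmem happ | read hmem happ =>
      simp only [fibM, fibδ, topsym, List.take, List.mem_cons, List.not_mem_nil, or_false,
        Prod.mk.injEq] at hmem
      all_goals
        obtain ⟨rfl, rfl⟩ := hmem
        cases happ
        constructor
        · simpa [IsXStore] using hrest
        · simp [configWeight, storeWeight, entryWeight, Nat.fib_add_two] <;> omega

theorem fibM_length_eq_storeWeight {q : QF} {w : List InA} {ω : Store ΓF}
    (hω : IsXStore ω) (h : fibM.Steps (.q0, w, ω) (q, [], [])) :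
    w.length = storeWeight ω := by
  have := (h.length_add_weight fibM_step_conserves_weight hω).2
  cases q <;> simpa [configWeight, storeWeight] using this

theorem fibM_step_from_Z {w : List InA} {k : ℕ} {c : Config QF InA ΓF}
    (h : fibM.Step (.q0, w, [(.Z, List.replicate k .F)]) c) :
    c = (.q0, w, [(.Z, List.replicate (k + 1) .F)]) ∨
      c = (.q0, w, [(.X2, List.replicate k .F)]) := by
  cases h with
  | eps hmem happ | read hmem happ =>
    rcases k with _ | k <;>
      simp only [fibM, fibδ, topsym, List.replicate_zero, List.replicate_succ, List.take,
        List.mem_cons, List.not_mem_nil, or_false, Prod.mk.injEq] at hmem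
    all_goals
      rcases hmem with ⟨rfl, rfl⟩ | ⟨rfl, rfl⟩ <;> cases happ <;> simp [List.replicate_succ]

theorem fibM_length_eq_fib_of_steps_from_Z {q : QF} {w : List InA} {k : ℕ}
    (h : fibM.Steps (.q0, w, [(.Z, List.replicate k .F)]) (q, [], [])) :
    ∃ n, w.length = Nat.fib (n + 1) := by
  generalize hc : ((.q0, w, [(.Z, List.replicate k .F)]) : Config QF InA ΓF) = c at h
  induction h using Relation.ReflTransGen.head_induction_on generalizing k with
  | refl => simp at hc
  | head hstep hrest ih =>
    subst hc
    rcases fibM_step_from_Z hstep with rfl | rfl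
    · exact ih rfl
    · have hX2 : IsXStore [(.X2, List.replicate k .F)] := by simp [IsXStore]
      exact ⟨k, by simpa [storeWeight, entryWeight] using fibM_length_eq_storeWeight hX2 hrest⟩

theorem fibM_steps_to_X2 (w : List InA) (k : ℕ) :
    fibM.Steps (.q0, w, [(.Z, [])]) (.q0, w, [(.X2, List.replicate k .F)]) := by
  have hZ : ∀ k, fibM.Steps (.q0, w, [(.Z, [])]) (.q0, w, [(.Z, List.replicate k .F)]) := by
    intro k
    induction k with
    | zero => exact .refl
    | succ k ih =>
      refine .tail ih (.eps (op := .push2 [.F]) ?_ rfl)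
      cases k <;> simp [fibM, fibδ, topsym, List.replicate_succ]
  refine .tail (hZ k) (.eps (op := .push1 [.X2]) ?_ rfl)
  cases k <;> simp [fibM, fibδ, topsym, List.replicate_succ]

theorem fibM_steps_pop_entry (j : ℕ) (rest : Store ΓF) (w : List InA) :
    fibM.Steps (.q0, List.replicate (Nat.fib (j + 2)) .a ++ w,
        (.X1, List.replicate j .F) :: rest) (.q0, w, rest) ∧
    fibM.Steps (.q0, List.replicate (Nat.fib (j + 1)) .a ++ w,
        (.X2, List.replicate j .F) :: rest) (.q0, w, rest) := by
  induction j generalizing rest w with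
  | zero =>
    exact ⟨.single (.read (op := .pop1) (by simp [fibM, fibδ, topsym]) rfl),
      .single (.read (op := .pop1) (by simp [fibM, fibδ, topsym]) rfl)⟩
  | succ j ih =>
    have hδ₁ : (QF.q0, Op.push1 [.X1, .X2]) ∈
        fibδ .q1 none (topsym ((.X1, List.replicate j .F) :: rest)) := by
      cases j <;> simp [fibδ, topsym, List.replicate_succ]
    have hδ₂ : (QF.q0, Op.push1 [.X1]) ∈
        fibδ .q2 none (topsym ((.X2, List.replicate j .F) :: rest)) := by
      cases j <;> simp [fibδ, topsym, List.replicate_succ]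
    constructor
    · rw [Nat.fib_add_two, add_comm, List.replicate_add, List.append_assoc]
      exact .head (.eps (op := .pop2) List.mem_cons_self rfl) <| .head (.eps hδ₁ rfl) <|
        (ih ((.X2, List.replicate j .F) :: rest) _).1.trans (ih rest w).2
    · exact .head (.eps (op := .pop2) List.mem_cons_self rfl) <|
        .head (.eps hδ₂ rfl) (ih rest w).1

/-- The Fibonacci automaton accepts `a^m` if and only if `m = f_n` for some `n`:
its language is exactly `{a^{f_n} : n ∈ ℕ}`, where `f_n = Nat.fib (n+1)` (the Fibonacci
sequence with `f_0 = f_1 = 1`). -/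
theorem fibM_language (u : List InA) :
    fibM.Accepts u ↔ ∃ n : ℕ, u = List.replicate (Nat.fib (n + 1)) InA.a := by
  constructor
  · rintro ⟨q, h⟩
    obtain ⟨n, hn⟩ := fibM_length_eq_fib_of_steps_from_Z (k := 0) h
    exact ⟨n, List.eq_replicate_iff.mpr ⟨hn, fun b _ => by cases b; rfl⟩⟩
  · rintro ⟨n, rfl⟩
    have hpop := (fibM_steps_pop_entry n [] []).2
    rw [List.append_nil] at hpop
    exact ⟨.q0, (fibM_steps_to_X2 _ n).trans hpop⟩
end

section
/- For every integer p ≥ 5 and every α ∈ {p, p+2}, there exists a 2-iterated pushdown automaton with input alphabet {b, w} that accepts a word u if and only if u = (φ(σ_p^k(W)))^α for some natural number k; these are exactly the contour words of the balls of the tiling {p,4} (for α = p) and of the tiling {p+2,3} (for α = p+2) of the hyperbolic plane, both of which are spanned sector-wise by the tree generated by the rules W → BW^{p−3}, B → BW^{p−4}. -/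
/-- The two-letter input alphabet `{b, w}`. -/
inductive bw where
  | b : bw
  | w : bw
  deriving DecidableEq

/-- The letter renaming `φ : B ↦ b, W ↦ w`. -/
def phi : BW → bw
  | .B => .b
  | .W => .w

/-- For `p ≥ 5`, the substitution `σ_p` determined by `σ_p(W) = BW^{p−3}` and
`σ_p(B) = BW^{p−4}`, on letters. -/
def sigmaPLetter (p : ℕ) : BW → List BW
  | .W => BW.B :: List.replicate (p - 3) BW.W
  | .B => BW.B :: List.replicate (p - 4) BW.W

/-- The substitution `σ_p` extended to words (monoid morphism of words). -/
def sigmaPWord (p : ℕ) (w : List BW) : List BW := w.flatMap (sigmaPLetter p)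

/-!
For any substitution `τ`, renaming `f` and word `v`, a 2-iterated pushdown automaton accepts
exactly the words `f(τ^k(v))`; the contour words are the case `τ = σ_p`, `v = W^α`, since
`σ_p^k` is a morphism. A store entry `(some a, s)` stands for the word `τ^{|s|}(a)`: the
inner store is a unary counter of the substitution steps still to be applied to `a`. The
automaton first guesses `k` by pushing `k` ticks onto the inner store of the bottom entry,
replaces it by the letters of `v`, each carrying those `k` ticks, and then works through the
store: an entry without ticks is matched against the input, and an entry `(some a, tick :: s)`
is expanded into the letters of `τ(a)`, each carrying `s`. By induction along a run, the
input still to be read always equals the word the store stands for.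
-/

namespace List

theorem iterate_flatMap {α : Type*} (τ : α → List α) (k : ℕ) (w : List α) :
    (·.flatMap τ)^[k] w = w.flatMap fun a => (·.flatMap τ)^[k] [a] := by
  induction k generalizing w with
  | zero => simp
  | succ k ih =>
    rw [Function.iterate_succ_apply, ih, List.flatMap_assoc]
    congr 1
    funext a
    rw [Function.iterate_succ_apply, List.flatMap_singleton, ih]

theorem iterate_flatMap_succ_singleton {α : Type*} (τ : α → List α) (k : ℕ) (a : α) :
    (·.flatMap τ)^[k + 1] [a] = (τ a).flatMap fun b => (·.flatMap τ)^[k] [b] := by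
  rw [Function.iterate_succ_apply, List.flatMap_singleton, List.iterate_flatMap]

end List

namespace SubstAutomaton

inductive Phase
  | init
  | run
  | expand
  deriving DecidableEq

instance : Fintype Phase :=
  ⟨{.init, .run, .expand}, fun q => by cases q <;> simp⟩

variable {A In : Type*}

/-- The store alphabet is `Option A`; `none` is both the bottom symbol and the tick of the
counters. -/
def transitions [DecidableEq In] (τ : A → List A) (f : A → In) (v : List A) :
    Phase → Option In → List (Option A) → List (Phase × Op (Option A))
  | .init, none, none :: _ => [(.init, .push2 [none]), (.run, .push1 (v.map some))]
  | .run, some c, [some a] => if f a = c then [(.run, .pop1)] else []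
  | .run, none, [some _, _] => [(.expand, .pop2)]
  | .expand, none, some a :: _ => [(.run, .push1 ((τ a).map some))]
  | _, _, _ => []

def automaton [DecidableEq In] (τ : A → List A) (f : A → In) (v : List A) :
    IPDA2 Phase In (Option A) :=
  ⟨.init, none, transitions τ f v⟩

section Semantics

variable (τ : A → List A) (f : A → In)

def entryValue : Option A × List (Option A) → List In
  | (some a, s) => ((·.flatMap τ)^[s.length] [a]).map f
  | (none, _) => []

def storeValue (ω : Store (Option A)) : List In :=
  ω.flatMap (entryValue τ f)

theorem storeValue_push (s : List (Option A)) (L : List A) :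
    storeValue τ f ((L.map some).map (·, s))
      = L.flatMap fun a => ((·.flatMap τ)^[s.length] [a]).map f := by
  simp [storeValue, List.flatMap_map, entryValue]

theorem storeValue_append (ω ρ : Store (Option A)) :
    storeValue τ f (ω ++ ρ) = storeValue τ f ω ++ storeValue τ f ρ :=
  List.flatMap_append

theorem storeValue_cons (a : A) (s : List (Option A)) (ω : Store (Option A)) :
    storeValue τ f ((some a, s) :: ω)
      = ((·.flatMap τ)^[s.length] [a]).map f ++ storeValue τ f ω :=
  rfl

/-- In phase `expand` the top entry has just lost the tick that is about to be spent. -/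
def expandValue : Store (Option A) → List In
  | [] => []
  | (x, s) :: ω => storeValue τ f ((x, none :: s) :: ω)

variable (v : List A)

def Invariant : Config Phase In (Option A) → Prop
  | (.init, w, [(none, _)]) => ∃ k, w = ((·.flatMap τ)^[k] v).map f
  | (.init, _, _) => True -- such configurations are unreachable
  | (.run, w, ω) => w = storeValue τ f ω
  | (.expand, w, ω) => w = expandValue τ f ω

end Semantics

variable [DecidableEq In] (τ : A → List A) (f : A → In) (v : List A)

theorem invariant_of_step {c c' : Config Phase In (Option A)}
    (h : (automaton τ f v).Step c c') (h' : Invariant τ f v c') : Invariant τ f v c := by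
  cases h with
  | eps hmem happ =>
    rename_i q q' w ω ω' op
    cases q
    case init =>
      rcases ω with _ | ⟨⟨_ | a, s⟩, _ | ⟨e, ω⟩⟩ <;>
        simp only [automaton, topsym, transitions, List.mem_cons, Prod.mk.injEq, List.not_mem_nil,
          or_false] at hmem
      · rcases hmem with ⟨rfl, rfl⟩ | ⟨rfl, rfl⟩ <;> cases happ
        · exact h'
        · refine ⟨s.length, ?_⟩
          rw [h', List.append_nil, storeValue_push, List.iterate_flatMap, List.map_flatMap]
      · trivial
    case run =>
      rcases ω with _ | ⟨⟨_ | a, _ | ⟨x, s⟩⟩, ω⟩ <;>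
        simp only [automaton, topsym, transitions, List.take_nil, List.take_succ_cons,
          List.take_zero, List.mem_cons, Prod.mk.injEq, List.not_mem_nil, or_false] at hmem
      obtain ⟨rfl, rfl⟩ := hmem
      cases happ
      simpa only [Invariant, expandValue, storeValue_cons, List.length_cons,
        Function.iterate_succ_apply] using h'
    case expand =>
      rcases ω with _ | ⟨⟨_ | a, s⟩, ω⟩ <;>
        simp only [automaton, topsym, transitions, List.mem_cons, Prod.mk.injEq, List.not_mem_nil,
          or_false] at hmem
      obtain ⟨rfl, rfl⟩ := hmem
      cases happ
      simp only [Invariant, storeValue_append] at h' ⊢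
      rw [h', storeValue_push, expandValue, storeValue_cons, List.length_cons,
        List.iterate_flatMap_succ_singleton, List.map_flatMap]
  | read hmem happ =>
    rename_i q q' c w ω ω' op
    rcases q with _ | _ | _ <;> rcases ω with _ | ⟨⟨_ | a, _ | ⟨x, s⟩⟩, ω⟩ <;>
      simp only [automaton, topsym, transitions, List.take_nil, List.take_succ_cons, List.take_zero,
        List.mem_ite_nil_right, List.mem_cons, Prod.mk.injEq, List.not_mem_nil, or_false] at hmem
    obtain ⟨rfl, rfl, rfl⟩ := hmem
    cases happ
    simp only [Invariant] at h' ⊢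
    rw [h', storeValue_cons]
    rfl

theorem invariant_of_steps {c : Config Phase In (Option A)} {q : Phase}
    (h : (automaton τ f v).Steps c (q, [], [])) : Invariant τ f v c := by
  induction h using Relation.ReflTransGen.head_induction_on with
  | refl => cases q <;> simp [Invariant, storeValue, expandValue]
  | head hstep _ ih => exact invariant_of_step τ f v hstep ih

theorem steps_read_store {ω₀ : Store (Option A)}
    (hω₀ : ∀ e ∈ ω₀, ∀ w ω,
      (automaton τ f v).Steps (.run, entryValue τ f e ++ w, e :: ω) (.run, w, ω))
    (w : List In) (ω : Store (Option A)) :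
    (automaton τ f v).Steps (.run, storeValue τ f ω₀ ++ w, ω₀ ++ ω) (.run, w, ω) := by
  induction ω₀ with
  | nil => exact .refl
  | cons e ω₀ ih =>
    have hread := hω₀ e List.mem_cons_self (storeValue τ f ω₀ ++ w) (ω₀ ++ ω)
    rw [storeValue, List.flatMap_cons, List.append_assoc]
    exact hread.trans (ih fun e he => hω₀ e (List.mem_cons_of_mem _ he))

theorem steps_read_entry (s : List (Option A)) (a : A) (w : List In) (ω : Store (Option A)) :
    (automaton τ f v).Steps (.run, entryValue τ f (some a, s) ++ w, (some a, s) :: ω)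
      (.run, w, ω) := by
  induction s generalizing a w ω with
  | nil =>
    refine .single (.read (op := .pop1) ?_ rfl)
    simp [automaton, transitions, topsym]
  | cons x s ih =>
    have hvalue :
        entryValue τ f (some a, x :: s) = storeValue τ f (((τ a).map some).map (·, s)) := by
      rw [storeValue_push, entryValue, List.length_cons, List.iterate_flatMap_succ_singleton,
        List.map_flatMap]
    have hexpand := steps_read_store τ f v (ω₀ := ((τ a).map some).map (·, s))
      (by simpa using fun b _ => ih b) w ω
    rw [hvalue]
    refine .head (.eps (q' := .expand) (op := .pop2) ?_ rfl)
      (.head (.eps (op := .push1 ((τ a).map some)) ?_ rfl) hexpand) <;>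
      simp [automaton, transitions, topsym]

theorem steps_init (u : List In) (k : ℕ) :
    (automaton τ f v).Steps (.init, u, [(none, [])])
      (.init, u, [(none, List.replicate k none)]) := by
  induction k with
  | zero => exact .refl
  | succ k ih =>
    refine ih.tail (.eps (op := .push2 [none]) ?_ rfl)
    simp [automaton, transitions, topsym]

theorem accepts_iff (u : List In) :
    (automaton τ f v).Accepts u ↔ ∃ k, u = ((·.flatMap τ)^[k] v).map f := by
  constructor
  · rintro ⟨q, h⟩
    exact invariant_of_steps τ f v h
  · rintro ⟨k, rfl⟩
    have hread := steps_read_store τ f v (ω₀ := (v.map some).map (·, List.replicate k none))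
      (by simpa using fun a _ => steps_read_entry τ f v _ a) [] []
    rw [storeValue_push, List.length_replicate, List.append_nil, List.append_nil,
      ← List.map_flatMap, ← List.iterate_flatMap] at hread
    refine ⟨.run, (steps_init τ f v _ k).trans
      (.head (.eps (q' := .run) (op := .push1 (v.map some)) ?_ rfl) ?_)⟩
    · simp [automaton, transitions, topsym]
    · rw [List.append_nil]
      exact hread

end SubstAutomaton

instance : Fintype BW :=
  ⟨{.B, .W}, fun a => by cases a <;> simp⟩

theorem exists_ipda2_contour_language_p4_and_p2_3_general (p α : ℕ) :
    ∃ (Q Γ : Type) (_ : Fintype Q) (_ : Fintype Γ) (M : IPDA2 Q bw Γ),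
      ∀ u : List bw,
        M.Accepts u ↔
          ∃ k : ℕ, u = (List.replicate α (((sigmaPWord p)^[k] [BW.W]).map phi)).flatten := by
  refine ⟨_, _, inferInstance, inferInstance,
    SubstAutomaton.automaton (sigmaPLetter p) phi (List.replicate α .W), fun u => ?_⟩
  rw [SubstAutomaton.accepts_iff]
  simp only [List.iterate_flatMap _ _ (List.replicate _ _), List.flatMap_replicate,
    List.map_flatten, List.map_replicate]
  rfl

/-- For every integer `p ≥ 5` and every `α ∈ {p, p+2}`, there is a 2-iterated pushdown
automaton with input alphabet `{b, w}` that accepts a word `u` if and only if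
`u = (φ(σ_p^k(W)))^α` for some `k : ℕ` — exactly the contour words of the balls of the
tiling `{p,4}` (for `α = p`) and of the tiling `{p+2,3}` (for `α = p+2`) of the
hyperbolic plane, both spanned sector-wise by the tree generated by the rules
`W → BW^{p−3}`, `B → BW^{p−4}`. -/
theorem exists_ipda2_contour_language_p4_and_p2_3 (p α : ℕ) (hp : 5 ≤ p)
    (hα : α = p ∨ α = p + 2) :
    ∃ (Q Γ : Type) (_ : Fintype Q) (_ : Fintype Γ) (M : IPDA2 Q bw Γ),
      ∀ u : List bw,
        M.Accepts u ↔
          ∃ k : ℕ, u = (List.replicate α (((sigmaPWord p)^[k] [BW.W]).map phi)).flatten :=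
  exists_ipda2_contour_language_p4_and_p2_3_general p α
end

section
/- Let Δ be a finite alphabet, h a substitution on Δ (a monoid morphism of words over Δ) such that h(x) is a nonempty word for every letter x ∈ Δ, let d ∈ Δ and let α ≥ 1 be an integer. Then there exists a 2-iterated pushdown automaton with input alphabet Δ that accepts a word u ∈ Δ* if and only if u = (h^k(d))^α for some natural number k, where h^k is the k-th iterate of h. -/
/-!
The automaton guesses `k` by pushing `k` tallies onto the inner store of its bottom entry and
then replaces that entry by `α` entries `(d, tallyᵏ)`. An entry `(x, tallyⁿ)` stands for the word
`hⁿ(x)`: for `n = 0` the letter `x` is read and the entry popped, otherwise one tally is popped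
and the entry is replaced by the letters of `h x`, each of which inherits the remaining `n - 1`
tallies because `push_1` copies the inner store. The store thus performs a depth-first traversal
of the tree of `d` down to level `k`, the inner stores acting as level counters. For soundness,
every configuration from which the empty store is reachable has as remaining input exactly the
word its store stands for (`Predicts`), which is propagated backwards along the run.
-/

open Relation

theorem List.flatMap_iterate {α : Type*} (f : α → List α) (n : ℕ) (w : List α) :
    (fun v => v.flatMap f)^[n] w = w.flatMap fun x => (fun v => v.flatMap f)^[n] [x] := by
  induction n generalizing w with
  | zero => simp
  | succ n ih =>
    rw [Function.iterate_succ_apply', ih, List.flatMap_assoc]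
    congr 1 with x
    rw [Function.iterate_succ_apply', ih [x], List.flatMap_singleton]

theorem List.flatMap_iterate_succ_singleton {α : Type*} (f : α → List α) (n : ℕ) (x : α) :
    (fun v => v.flatMap f)^[n + 1] [x] = (fun v => v.flatMap f)^[n] (f x) := by
  simp [Function.iterate_succ_apply]

theorem reflTransGen_consume_entries {S I E ι : Type*}
    {r : S × List I × List E → S × List I × List E → Prop} {q : S}
    {u : ι → List I} {e : ι → E}
    (he : ∀ i w rest, ReflTransGen r (q, u i ++ w, e i :: rest) (q, w, rest))
    (l : List ι) (w : List I) (rest : List E) :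
    ReflTransGen r (q, l.flatMap u ++ w, l.map e ++ rest) (q, w, rest) := by
  induction l with
  | nil => exact .refl
  | cons i l ih => simpa using (he i _ _).trans ih

namespace SubstitutionLevels

inductive State
  | guess
  | run
  | expand
  deriving DecidableEq

instance : Fintype State :=
  ⟨{.guess, .run, .expand}, fun q => by cases q <;> simp⟩

inductive Sym (Δ : Type)
  | letter (x : Δ)
  | tally
  | bottom
  deriving Fintype

variable {Δ : Type} (h : Δ → List Δ) (d : Δ) (α : ℕ)

inductive Move : Config State Δ (Sym Δ) → Config State Δ (Sym Δ) → Prop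
  | guess (w s rest) :
      Move (.guess, w, (.bottom, s) :: rest) (.guess, w, (.bottom, .tally :: s) :: rest)
  | start (w s rest) :
      Move (.guess, w, (.bottom, s) :: rest) (.run, w, List.replicate α (.letter d, s) ++ rest)
  | read (x w rest) : Move (.run, x :: w, (.letter x, []) :: rest) (.run, w, rest)
  | descend (x s w rest) :
      Move (.run, w, (.letter x, .tally :: s) :: rest) (.expand, w, (.letter x, s) :: rest)
  | unfold (x s w rest) :
      Move (.expand, w, (.letter x, s) :: rest)
        (.run, w, (h x).map (fun y => (.letter y, s)) ++ rest)

def runStore (l : List (Δ × ℕ)) : Store (Sym Δ) :=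
  l.map fun p => (.letter p.1, List.replicate p.2 .tally)

def runWord (l : List (Δ × ℕ)) : List Δ :=
  l.flatMap fun p => (fun w => w.flatMap h)^[p.2] [p.1]

theorem runStore_eq_cons_iff {l : List (Δ × ℕ)} {A : Sym Δ} {s : List (Sym Δ)}
    {rest : Store (Sym Δ)} :
    runStore l = (A, s) :: rest ↔ ∃ x n l', l = (x, n) :: l' ∧ A = .letter x ∧
      s = List.replicate n .tally ∧ rest = runStore l' := by
  simp only [runStore, List.map_eq_cons_iff, Prod.mk.injEq]
  constructor
  · rintro ⟨⟨x, n⟩, l', rfl, ⟨rfl, rfl⟩, rfl⟩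
    exact ⟨x, n, l', rfl, rfl, rfl, rfl⟩
  · rintro ⟨x, n, l', rfl, rfl, rfl, rfl⟩
    exact ⟨(x, n), l', rfl, ⟨rfl, rfl⟩, rfl⟩

theorem reaches_run_entry (n : ℕ) (x : Δ) (w : List Δ) (rest : Store (Sym Δ)) :
    ReflTransGen (Move h d α)
      (.run, (fun w => w.flatMap h)^[n] [x] ++ w, (.letter x, List.replicate n .tally) :: rest)
      (.run, w, rest) := by
  induction n generalizing x w rest with
  | zero => exact .single (.read x w rest)
  | succ n ih =>
    rw [List.flatMap_iterate_succ_singleton, List.flatMap_iterate]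
    exact .head (.descend x _ _ rest)
      (.head (.unfold x _ _ rest) (reflTransGen_consume_entries ih _ _ _))

theorem reaches_guess (k : ℕ) (w : List Δ) :
    ReflTransGen (Move h d α) (.guess, w, [(.bottom, [])])
      (.guess, w, [(.bottom, List.replicate k .tally)]) := by
  induction k with
  | zero => exact .refl
  | succ k ih => exact ih.tail (.guess w _ [])

theorem reaches_accept_of_level (k : ℕ) :
    ReflTransGen (Move h d α)
      (.guess, (List.replicate α ((fun w => w.flatMap h)^[k] [d])).flatten, [(.bottom, [])])
      (.run, [], []) := by
  refine (reaches_guess h d α k _).trans (.head (.start _ _ []) ?_)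
  simpa [List.flatMap_replicate] using
    reflTransGen_consume_entries (reaches_run_entry h d α k) (List.replicate α d) [] []

def Predicts : Config State Δ (Sym Δ) → Prop
  | (.guess, w, ω) => ∀ n, ω = [(.bottom, List.replicate n .tally)] →
      ∃ k, w = (List.replicate α ((fun w => w.flatMap h)^[k] [d])).flatten
  | (.run, w, ω) => ∀ l, ω = runStore l → w = runWord h l
  | (.expand, w, ω) => ∀ x n l, ω = runStore ((x, n) :: l) → w = runWord h ((x, n + 1) :: l)

theorem Move.predicts {c c' : Config State Δ (Sym Δ)} (hm : Move h d α c c')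
    (hc' : Predicts h d α c') : Predicts h d α c := by
  cases hm with
  | guess w s rest =>
    intro n hω
    obtain ⟨rfl, rfl⟩ : s = List.replicate n .tally ∧ rest = [] := by simpa using hω
    exact hc' (n + 1) rfl
  | start w s rest =>
    intro n hω
    obtain ⟨rfl, rfl⟩ : s = List.replicate n .tally ∧ rest = [] := by simpa using hω
    refine ⟨n, ?_⟩
    simpa [runStore, runWord, List.flatMap_replicate] using hc' (List.replicate α (d, n))
  | read x w rest =>
    intro l hω
    obtain ⟨x, n, l, rfl, ⟨⟩, hn, rfl⟩ := runStore_eq_cons_iff.mp hω.symm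
    obtain rfl : n = 0 := by simpa using hn.symm
    simpa [runWord] using hc' l rfl
  | descend x s w rest =>
    intro l hω
    obtain ⟨x, n, l, rfl, ⟨⟩, hn, rfl⟩ := runStore_eq_cons_iff.mp hω.symm
    cases n with
    | zero => cases hn
    | succ n =>
      obtain rfl : s = List.replicate n .tally := by simpa [List.replicate_succ] using hn
      exact hc' x n l rfl
  | unfold x s w rest =>
    intro x' n l hω
    obtain ⟨x, n, l, ⟨⟩, ⟨⟩, rfl, rfl⟩ := runStore_eq_cons_iff.mp hω.symm
    have hw := hc' ((h x).map (·, n) ++ l) (by simp [runStore])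
    rw [hw, runWord, runWord, List.flatMap_cons, List.flatMap_iterate_succ_singleton,
      List.flatMap_iterate, List.flatMap_append, List.flatMap_map]

theorem predicts_of_reaches_empty {c : Config State Δ (Sym Δ)} {q : State}
    (hc : ReflTransGen (Move h d α) c (q, [], [])) : Predicts h d α c := by
  induction hc using ReflTransGen.head_induction_on with
  | refl => cases q <;> simp [Predicts, runStore, runWord]
  | head hm _ ih => exact hm.predicts h d α ih

def machine [DecidableEq Δ] : IPDA2 State Δ (Sym Δ) where
  q0 := .guess
  Z := .bottom
  δ q a t := match q, a, t with
    | .guess, none, .bottom :: _ =>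
        [(.guess, .push2 [.tally]), (.run, .push1 (List.replicate α (.letter d)))]
    | .run, some a, [.letter x] => if a = x then [(.run, .pop1)] else []
    | .run, none, [.letter _, .tally] => [(.expand, .pop2)]
    | .expand, none, .letter x :: _ => [(.run, .push1 ((h x).map .letter))]
    | _, _, _ => []

theorem move_of_machine_step [DecidableEq Δ] {c c' : Config State Δ (Sym Δ)}
    (hs : (machine h d α).Step c c') : Move h d α c c' := by
  rcases hs with @⟨q, q', w, ω, ω', op, hmem, happ⟩ | @⟨q, q', a, w, ω, ω', op, hmem, happ⟩
  all_goals
    rcases ω with _ | ⟨⟨A, s⟩, rest⟩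
    · simp [machine, topsym] at hmem
    rcases q with _ | _ | _ <;> rcases A with x | _ | _ <;>
      simp only [machine, topsym, List.mem_cons, Prod.mk.injEq, List.not_mem_nil, or_false]
        at hmem
  · rcases hmem with ⟨rfl, rfl⟩ | ⟨rfl, rfl⟩ <;>
      simp only [applyOp, Option.some.injEq] at happ <;> subst happ
    · exact .guess ..
    · simpa using (Move.start w s rest : Move h d α _ _)
  · rcases s with _ | ⟨_ | _ | _, s⟩ <;>
      simp only [List.take_nil, List.take_succ_cons, List.take_zero,
        List.mem_cons, Prod.mk.injEq, List.not_mem_nil, or_false] at hmem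
    obtain ⟨rfl, rfl⟩ := hmem
    simp only [applyOp, Option.some.injEq] at happ
    subst happ
    exact .descend ..
  · obtain ⟨rfl, rfl⟩ := hmem
    simp only [applyOp, Option.some.injEq] at happ
    subst happ
    rw [List.map_map]
    exact .unfold ..
  · rcases s with _ | ⟨_ | _ | _, s⟩ <;>
      simp only [List.take_nil, List.take_succ_cons, List.take_zero, List.mem_ite_nil_right,
        List.mem_cons, Prod.mk.injEq, List.not_mem_nil, or_false] at hmem
    obtain ⟨rfl, rfl, rfl⟩ := hmem
    simp only [applyOp, Option.some.injEq] at happ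
    subst happ
    exact .read ..

theorem Move.machine_step [DecidableEq Δ] {c c' : Config State Δ (Sym Δ)}
    (hm : Move h d α c c') : (machine h d α).Step c c' := by
  rcases hm with _ | _ | _ | _ | x
  · exact .eps (op := .push2 [.tally]) (by simp [machine, topsym]) rfl
  · exact .eps (op := .push1 (List.replicate α (.letter d))) (by simp [machine, topsym])
      (by simp [applyOp])
  · exact .read (op := .pop1) (by simp [machine, topsym]) rfl
  · exact .eps (op := .pop2) (by simp [machine, topsym]) rfl
  · exact .eps (op := .push1 ((h x).map .letter)) (by simp [machine, topsym]) (by simp [applyOp])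

theorem machine_steps_eq [DecidableEq Δ] :
    (machine h d α).Steps = ReflTransGen (Move h d α) := by
  have : (machine h d α).Step = Move h d α := by
    ext c c'
    exact ⟨move_of_machine_step h d α, Move.machine_step h d α⟩
  rw [IPDA2.Steps, this]

theorem machine_accepts_iff [DecidableEq Δ] (u : List Δ) : (machine h d α).Accepts u ↔
    ∃ k, u = (List.replicate α ((fun w => w.flatMap h)^[k] [d])).flatten := by
  rw [IPDA2.Accepts, machine_steps_eq]
  constructor
  · rintro ⟨q, hq⟩
    exact predicts_of_reaches_empty h d α hq 0 rfl
  · rintro ⟨k, rfl⟩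
    exact ⟨.run, reaches_accept_of_level h d α k⟩

end SubstitutionLevels

open SubstitutionLevels in
theorem exists_ipda2_substitution_levels_general (Δ : Type) [Fintype Δ] (h : Δ → List Δ)
    (d : Δ) (α : ℕ) :
    ∃ (Q Γ : Type) (_ : Fintype Q) (_ : Fintype Γ) (M : IPDA2 Q Δ Γ),
      ∀ u : List Δ,
        M.Accepts u ↔
          ∃ k : ℕ, u = (List.replicate α ((fun w => w.flatMap h)^[k] [d])).flatten := by
  classical
  exact ⟨State, Sym Δ, inferInstance, inferInstance, machine h d α,
    machine_accepts_iff h d α⟩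

/-- Let `Δ` be a finite alphabet, `h` a substitution on `Δ` (extended to words as
`w ↦ w.flatMap h`) with `h x` nonempty for every letter `x`, let `d ∈ Δ` and let
`α ≥ 1`. Then there exists a 2-iterated pushdown automaton with input alphabet `Δ` that
accepts a word `u` if and only if `u = (h^k(d))^α` for some `k : ℕ`, where `h^k(d)` is
the level-`k` word of the tree with root labelled `d` in which the sons of a node
labelled `x` are given, in order, by `h x`. -/
theorem exists_ipda2_substitution_levels (Δ : Type) [Fintype Δ] (h : Δ → List Δ)
    (hne : ∀ x : Δ, h x ≠ []) (d : Δ) (α : ℕ) (hα : 1 ≤ α) :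
    ∃ (Q Γ : Type) (_ : Fintype Q) (_ : Fintype Γ) (M : IPDA2 Q Δ Γ),
      ∀ u : List Δ,
        M.Accepts u ↔
          ∃ k : ℕ, u = (List.replicate α ((fun w => w.flatMap h)^[k] [d])).flatten :=
  exists_ipda2_substitution_levels_general Δ h d α
end

section
/- There exists a 2-iterated pushdown automaton with input alphabet {o, h, c, t} that accepts a word u if and only if u = (ψ(τ^k(O)))^8 for some natural number k; these are exactly the contour words of the balls of the dodecagrid, the tiling {5,3,4} of hyperbolic 3-space, which splits into 8 sectors around its central point, each spanned by the tree generated from a root labelled O by the rules τ. -/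
/-- The four-letter alphabet `{O, H, C, T}` of node labels of the dodecagrid trees. -/
inductive OHCT where
  | O : OHCT
  | H : OHCT
  | C : OHCT
  | T : OHCT
  deriving DecidableEq

/-- The substitution `τ` determined by `τ(O) = O⁵C³T`, `τ(H) = O⁴C³T`, `τ(C) = O³C³T`
and `τ(T) = O²HC²T`, on letters. -/
def tauLetter : OHCT → List OHCT
  | .O => [.O, .O, .O, .O, .O, .C, .C, .C, .T]
  | .H => [.O, .O, .O, .O, .C, .C, .C, .T]
  | .C => [.O, .O, .O, .C, .C, .C, .T]
  | .T => [.O, .O, .H, .C, .C, .T]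

/-- The substitution `τ` extended to words (monoid morphism of words). -/
def tauWord (w : List OHCT) : List OHCT := w.flatMap tauLetter

/-- The four-letter input alphabet `{o, h, c, t}`. -/
inductive ohct where
  | o : ohct
  | h : ohct
  | c : ohct
  | t : ohct
  deriving DecidableEq

/-- The letter renaming `ψ : O ↦ o, H ↦ h, C ↦ c, T ↦ t`. -/
def psi : OHCT → ohct
  | .O => .o
  | .H => .h
  | .C => .c
  | .T => .t

/-!
The contour words are `ψ(τᵏ(O⁸))`, so they form an HD0L language, and every HD0L language
`{ψ(σᵏ(w₀)) | k ∈ ℕ}` is accepted by a 2-iterated pushdown automaton. A store entry `(a, s)`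
stands for the word `ψ(σ^|s|(a))`. The automaton guesses `k` by pushing `k` counter symbols into
the inner store of the bottom entry and then replaces that entry by the letters of `w₀`, each
carrying a copy of the counter, which is exactly what `push_1` does. From then on it either
decrements the counter of the top entry `(a, x :: s)` and replaces the entry by the letters of
`σ(a)`, each with counter `s`, or, when the counter is empty, reads `ψ(a)`. Conversely the word
represented by the store is invariant along every run, up to the input already read.
-/

instance : Fintype OHCT :=
  ⟨{.O, .H, .C, .T}, fun x => by cases x <;> simp⟩

namespace HD0L

inductive Mode
  | count
  | scan
  | expand
  deriving DecidableEq

instance : Fintype Mode :=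
  ⟨{.count, .scan, .expand}, fun m => by cases m <;> simp⟩

variable {α β : Type*} (σ : α → List α) (ψ : α → β) (w₀ : List α)

def language : Language β :=
  Set.range fun k => ((·.flatMap σ)^[k] w₀).map ψ

theorem iterate_flatMap (k : ℕ) (w : List α) :
    (·.flatMap σ)^[k] w = w.flatMap fun a => (·.flatMap σ)^[k] [a] := by
  induction k generalizing w with
  | zero => simp
  | succ k ih =>
    rw [Function.iterate_succ_apply, ih, List.flatMap_assoc]
    congr 1
    funext a
    rw [Function.iterate_succ_apply, List.flatMap_singleton, ih]

def contour (ω : Store (Option α)) : List β :=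
  ω.flatMap fun e => ((·.flatMap σ)^[e.2.length] e.1.toList).map ψ

theorem contour_append (ω ω' : Store (Option α)) :
    contour σ ψ (ω ++ ω') = contour σ ψ ω ++ contour σ ψ ω' :=
  List.flatMap_append

theorem contour_map_some (v : List α) (s : List (Option α)) :
    contour σ ψ ((v.map some).map (·, s)) = ((·.flatMap σ)^[s.length] v).map ψ := by
  rw [iterate_flatMap, List.map_flatMap, contour, List.map_map, List.flatMap_map]
  rfl

theorem contour_expand (a : α) (x : Option α) (s : List (Option α)) (rest : Store (Option α)) :
    contour σ ψ (((σ a).map some).map (·, s) ++ rest) =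
      contour σ ψ ((some a, x :: s) :: rest) := by
  rw [contour_append, contour_map_some, ← List.flatMap_singleton σ a,
    ← Function.iterate_succ_apply]
  rfl

/-- In mode `expand` the top counter has already been decremented, so the store is read as it
was before that `pop2`. -/
def pending : Mode → Store (Option α) → List β
  | .scan, ω => contour σ ψ ω
  | .expand, (A, s) :: rest => contour σ ψ ((A, none :: s) :: rest)
  | _, _ => []

variable [DecidableEq β]

/-- `none` serves both as the bottom symbol and as the counter symbol of the inner stores. -/
def δ : Mode → Option β → List (Option α) → List (Mode × Op (Option α))
  | .count, none, none :: _ => [(.count, .push2 [none]), (.scan, .push1 (w₀.map some))]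
  | .scan, none, [some _, _] => [(.expand, .pop2)]
  | .scan, some b, [some a] => if ψ a = b then [(.scan, .pop1)] else []
  | .expand, none, some a :: _ => [(.scan, .push1 ((σ a).map some))]
  | _, _, _ => []

def automaton : IPDA2 Mode β (Option α) := ⟨.count, none, δ σ ψ w₀⟩

theorem steps_scan_of_entries {s : List (Option α)}
    (hentry : ∀ a w rest, (automaton σ ψ w₀).Steps
      (.scan, contour σ ψ [(some a, s)] ++ w, (some a, s) :: rest) (.scan, w, rest))
    (v : List α) (w : List β) (rest : Store (Option α)) :
    (automaton σ ψ w₀).Steps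
      (.scan, contour σ ψ ((v.map some).map (·, s)) ++ w, (v.map some).map (·, s) ++ rest)
      (.scan, w, rest) := by
  induction v generalizing w with
  | nil => exact .refl
  | cons a v ih =>
    rw [List.map_cons, List.map_cons, ← List.singleton_append, contour_append, List.append_assoc]
    exact (hentry _ _ _).trans (ih w)

theorem steps_scan_entry (a : α) (s : List (Option α)) (w : List β) (rest : Store (Option α)) :
    (automaton σ ψ w₀).Steps
      (.scan, contour σ ψ [(some a, s)] ++ w, (some a, s) :: rest) (.scan, w, rest) := by
  induction s generalizing a w rest with
  | nil =>
    change (automaton σ ψ w₀).Steps (.scan, ψ a :: w, (some a, []) :: rest) (.scan, w, rest)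
    exact .single (.read (q' := Mode.scan) (op := .pop1) (by simp [automaton, δ, topsym]) rfl)
  | cons x s ih =>
    rw [← contour_expand σ ψ a x s [], List.append_nil]
    refine .head (.eps (q' := Mode.expand) (op := .pop2) (by simp [automaton, δ, topsym]) rfl) ?_
    refine .head (.eps (q' := Mode.scan) (op := .push1 ((σ a).map some))
      (by simp [automaton, δ, topsym]) rfl) ?_
    exact steps_scan_of_entries σ ψ w₀ ih (σ a) w rest

theorem steps_count (u : List β) (k : ℕ) :
    (automaton σ ψ w₀).Steps (.count, u, [(none, [])])
      (.count, u, [(none, List.replicate k none)]) := by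
  induction k with
  | zero => exact .refl
  | succ k ih =>
    exact ih.tail
      (.eps (q' := Mode.count) (op := .push2 [none]) (by simp [automaton, δ, topsym]) rfl)

theorem accepts_of_mem_language {u : List β} (hu : u ∈ language σ ψ w₀) :
    (automaton σ ψ w₀).Accepts u := by
  obtain ⟨k, rfl⟩ := hu
  have hscan := steps_scan_of_entries σ ψ w₀ (steps_scan_entry σ ψ w₀ · (List.replicate k none))
    w₀ [] []
  rw [contour_map_some, List.length_replicate, List.append_nil] at hscan
  exact ⟨.scan, (steps_count σ ψ w₀ _ k).trans (.head (.eps (q' := Mode.scan)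
    (op := .push1 (w₀.map some)) (by simp [automaton, δ, topsym]) rfl) hscan)⟩

theorem pending_eq_of_step {q q' : Mode} {u u' : List β} {ω ω' : Store (Option α)}
    (h : (automaton σ ψ w₀).Step (q, u, ω) (q', u', ω')) (hq : q ≠ .count) :
    q' ≠ .count ∧ (u' = pending σ ψ q' ω' → u = pending σ ψ q ω) := by
  rcases h with ⟨hmem, happ⟩ | ⟨hmem, happ⟩ <;>
  rcases ω with _ | ⟨⟨_ | a, _ | ⟨x, s⟩⟩, rest⟩ <;> cases q <;>
    simp [automaton, δ, topsym] at hmem hq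
  all_goals
    casesm* _ ∧ _
    subst_vars
    simp only [applyOp, Option.some.injEq] at happ
    subst happ
    refine ⟨nofun, ?_⟩
    rintro rfl
  · exact contour_expand σ ψ a none [] rest
  · rfl
  · exact contour_expand σ ψ a none (x :: s) rest
  · rfl

theorem pending_eq_of_steps {c : Config Mode β (Option α)} {qf : Mode}
    (h : (automaton σ ψ w₀).Steps c (qf, [], [])) (hc : c.1 ≠ .count) :
    c.2.1 = pending σ ψ c.1 c.2.2 := by
  induction h using Relation.ReflTransGen.head_induction_on with
  | refl => cases qf <;> rfl
  | head hstep _ ih =>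
    obtain ⟨hq', hpending⟩ := pending_eq_of_step σ ψ w₀ hstep hc
    exact hpending (ih hq')

theorem exists_eq_of_steps_count {c : Config Mode β (Option α)} {qf : Mode}
    (h : (automaton σ ψ w₀).Steps c (qf, [], [])) (hc : c.1 = .count) (hω : c.2.2 ≠ []) :
    ∃ k, c.2.1 = ((·.flatMap σ)^[k] w₀).map ψ ++ contour σ ψ c.2.2.tail := by
  induction h using Relation.ReflTransGen.head_induction_on with
  | refl => exact absurd rfl hω
  | @head c _ hstep hrest ih =>
    obtain ⟨q, u, ω⟩ := c
    dsimp only at hc hω ⊢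
    subst hc
    rcases hstep with ⟨hmem, happ⟩ | ⟨hmem, happ⟩ <;>
    rcases ω with _ | ⟨⟨_ | a, s⟩, rest⟩ <;>
      simp [automaton, δ, topsym] at hmem hω
    rcases hmem with ⟨rfl, rfl⟩ | ⟨rfl, rfl⟩ <;>
      simp only [applyOp, Option.some.injEq] at happ <;> subst happ
    · exact ih rfl (List.cons_ne_nil _ _)
    · refine ⟨s.length, ?_⟩
      have hu : u = pending σ ψ .scan _ := pending_eq_of_steps σ ψ w₀ hrest nofun
      rw [hu, pending, contour_append, contour_map_some]
      rfl

theorem accepts_iff (u : List β) : (automaton σ ψ w₀).Accepts u ↔ u ∈ language σ ψ w₀ := by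
  refine ⟨fun ⟨_, h⟩ => ?_, accepts_of_mem_language σ ψ w₀⟩
  obtain ⟨k, hk⟩ := exists_eq_of_steps_count σ ψ w₀ h rfl (List.cons_ne_nil _ _)
  exact ⟨k, by simpa [contour] using hk.symm⟩

end HD0L

/-- There exists a 2-iterated pushdown automaton with input alphabet `{o, h, c, t}` that
accepts a word `u` if and only if `u = (ψ(τ^k(O)))^8` for some `k : ℕ` — exactly the
contour words of the balls of the dodecagrid, the tiling `{5,3,4}` of hyperbolic
3-space, which splits into 8 sectors around its central point, each spanned by the tree
generated from a root labelled `O` by the rules `τ`. -/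
theorem exists_ipda2_dodecagrid_ball_contours :
    ∃ (Q Γ : Type) (_ : Fintype Q) (_ : Fintype Γ) (M : IPDA2 Q ohct Γ),
      ∀ u : List ohct,
        M.Accepts u ↔
          ∃ k : ℕ, u = (List.replicate 8 ((tauWord^[k] [OHCT.O]).map psi)).flatten := by
  refine ⟨HD0L.Mode, Option OHCT, inferInstance, inferInstance,
    HD0L.automaton tauLetter psi (List.replicate 8 .O), fun u => ?_⟩
  have hτ (k : ℕ) : ((·.flatMap tauLetter)^[k] (List.replicate 8 .O)).map psi =
      (List.replicate 8 ((tauWord^[k] [OHCT.O]).map psi)).flatten := by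
    rw [HD0L.iterate_flatMap, List.flatMap_replicate, List.map_flatten, List.map_replicate]
    rfl
  rw [HD0L.accepts_iff]
  exact exists_congr fun k => by rw [← hτ]; exact eq_comm
end

section
/- For each letter γ ∈ {O, H, C, T}, there exists a 2-iterated pushdown automaton with input alphabet {o, h, c, t} that accepts a word u if and only if u = ψ(τ^k(γ)) for some natural number k; these are the level words read on the border of the k-truncated γ-sectors of the dodecagrid, the tiling {5,3,4} of hyperbolic 3-space. -/
/-!
The automaton first guesses `k` by pushing `k` counter symbols onto the inner store of its
single entry `(γ, ε)`. An entry carrying a letter `A` and `j` counter symbols stands for the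
word `ψ(τ^j(A))`: if `j = 0` the automaton reads `ψ(A)` and pops the entry, otherwise it
removes one counter symbol (`pop_2`) and replaces the entry by the letters of `τ(A)` (`push_1`),
each of which inherits the remaining `j - 1` counter symbols. So at every moment the store
stands for exactly the part of the input still to be read, which gives both inclusions. The
argument works for any substitution `σ` and any renaming `f`.
-/

instance inst_s14 : Fintype OHCT where
  elems := {.O, .H, .C, .T}
  complete := by intro x; cases x <;> simp

namespace SubstIPDA

open Relation

inductive Phase where
  | count : Phase
  | run : Phase
  | expand : Phase
  deriving DecidableEq

instance : Fintype Phase where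
  elems := {.count, .run, .expand}
  complete := by intro x; cases x <;> simp

variable {α β : Type*} (σ : α → List α) (f : α → β)

theorem iterate_flatMap (j : ℕ) (w : List α) :
    (·.flatMap σ)^[j] w = w.flatMap fun A => (·.flatMap σ)^[j] [A] := by
  induction j with
  | zero => simp
  | succ j ih => simp only [Function.iterate_succ_apply', ih, List.flatMap_assoc]

/-- An abstract store is a list of pairs `(A, j)`, the pair standing for `σ^j(A)`. -/
def unfold (L : List (α × ℕ)) : List α :=
  L.flatMap fun p => (·.flatMap σ)^[p.2] [p.1]

@[simp] theorem unfold_nil : unfold σ [] = [] := rfl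

@[simp] theorem unfold_cons (A : α) (j : ℕ) (L : List (α × ℕ)) :
    unfold σ ((A, j) :: L) = (·.flatMap σ)^[j] [A] ++ unfold σ L := rfl

@[simp] theorem unfold_append (L L' : List (α × ℕ)) :
    unfold σ (L ++ L') = unfold σ L ++ unfold σ L' :=
  List.flatMap_append

theorem unfold_map_pair (j : ℕ) (w : List α) :
    unfold σ (w.map (·, j)) = (·.flatMap σ)^[j] w := by
  rw [unfold, List.flatMap_map, iterate_flatMap]

theorem unfold_expand (A : α) (j : ℕ) :
    unfold σ ((σ A).map (·, j)) = (·.flatMap σ)^[j + 1] [A] := by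
  rw [unfold_map_pair, Function.iterate_succ_apply, List.flatMap_singleton]

inductive Move :
    Phase × List β × List (α × ℕ) → Phase × List β × List (α × ℕ) → Prop
  | pushCounter {A : α} {j : ℕ} {u : List β} {L : List (α × ℕ)} :
      Move (.count, u, (A, j) :: L) (.count, u, (A, j + 1) :: L)
  | start {A : α} {j : ℕ} {u : List β} {L : List (α × ℕ)} :
      Move (.count, u, (A, j) :: L) (.run, u, (A, j) :: L)
  | read {A : α} {u : List β} {L : List (α × ℕ)} :
      Move (.run, f A :: u, (A, 0) :: L) (.run, u, L)
  | popCounter {A : α} {j : ℕ} {u : List β} {L : List (α × ℕ)} :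
      Move (.run, u, (A, j + 1) :: L) (.expand, u, (A, j) :: L)
  | expand {A : α} {j : ℕ} {u : List β} {L : List (α × ℕ)} :
      Move (.expand, u, (A, j) :: L) (.run, u, (σ A).map (·, j) ++ L)

/-- The remaining input is the word the store stands for; in phase `expand` the top entry has
already lost one counter symbol, and in phase `count` its counter is still being guessed. -/
def Produces : Phase × List β × List (α × ℕ) → Prop
  | (.run, u, L) => u = (unfold σ L).map f
  | (.expand, u, (A, j) :: L) => u = (unfold σ ((A, j + 1) :: L)).map f
  | (.count, u, (A, _) :: L) => ∃ k, u = (unfold σ ((A, k) :: L)).map f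
  | (_, u, []) => u = []

theorem Produces.of_move {c c' : Phase × List β × List (α × ℕ)} (h : Move σ f c c')
    (hc' : Produces σ f c') : Produces σ f c := by
  cases h with
  | pushCounter => exact hc'
  | start => exact ⟨_, hc'⟩
  | read => simp_all [Produces]
  | popCounter => exact hc'
  | expand => simpa only [Produces, unfold_append, unfold_expand, unfold_cons] using hc'

theorem moves_run_of_forall_mem (L : List (α × ℕ))
    (hL : ∀ p ∈ L, ∀ v R, ReflTransGen (Move σ f)
      (.run, ((·.flatMap σ)^[p.2] [p.1]).map f ++ v, p :: R) (.run, v, R))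
    (v : List β) (R : List (α × ℕ)) :
    ReflTransGen (Move σ f) (.run, (unfold σ L).map f ++ v, L ++ R) (.run, v, R) := by
  induction L with
  | nil => exact .refl
  | cons p L ih =>
    obtain ⟨A, j⟩ := p
    simp only [unfold_cons, List.map_append, List.append_assoc, List.cons_append]
    exact (hL _ List.mem_cons_self _ _).trans
      (ih fun q hq => hL q (List.mem_cons_of_mem _ hq))

theorem moves_run_entry (j : ℕ) (A : α) (v : List β) (R : List (α × ℕ)) :
    ReflTransGen (Move σ f)
      (.run, ((·.flatMap σ)^[j] [A]).map f ++ v, (A, j) :: R) (.run, v, R) := by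
  induction j generalizing A v R with
  | zero => exact .single .read
  | succ j ih =>
    have hrun := moves_run_of_forall_mem σ f ((σ A).map (·, j))
      (by simp only [List.mem_map]; rintro _ ⟨B, -, rfl⟩; exact ih B) v R
    rw [unfold_expand] at hrun
    exact .head .popCounter (.head .expand hrun)

theorem moves_count (A : α) (u : List β) (L : List (α × ℕ)) (k : ℕ) :
    ReflTransGen (Move σ f) (.count, u, (A, 0) :: L) (.count, u, (A, k) :: L) := by
  induction k with
  | zero => exact .refl
  | succ k ih => exact ih.tail .pushCounter

def encode : List (α × ℕ) → Store (Option α) :=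
  List.map fun p => (some p.1, List.replicate p.2 none)

theorem encode_injective : Function.Injective (encode : List (α × ℕ) → Store (Option α)) :=
  List.map_injective_iff.2 fun p q h => by
    simp only [Prod.mk.injEq, Option.some.injEq, List.replicate_inj] at h
    exact Prod.ext h.1 (by omega)

def transitions [DecidableEq β] :
    Phase → Option β → List (Option α) → List (Phase × Op (Option α))
  | .count, none, some _ :: _ => [(.count, .push2 [none]), (.run, .push2 [])]
  | .run, none, [some _, none] => [(.expand, .pop2)]
  | .run, some b, [some A] => if b = f A then [(.run, .pop1)] else []
  | .expand, none, some A :: _ => [(.run, .push1 ((σ A).map some))]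
  | _, _, _ => []

def ipda [DecidableEq β] (a : α) : IPDA2 Phase β (Option α) where
  q0 := .count
  Z := some a
  δ := transitions σ f

section Simulation

variable [DecidableEq β] (a : α)

def encodeConfig (c : Phase × List β × List (α × ℕ)) : Config Phase β (Option α) :=
  (c.1, c.2.1, encode c.2.2)

theorem step_of_move {c c' : Phase × List β × List (α × ℕ)} (h : Move σ f c c') :
    (ipda σ f a).Step (encodeConfig c) (encodeConfig c') := by
  cases h with
  | pushCounter =>
    refine .eps (op := .push2 [none]) ?_ ?_ <;>
      simp [ipda, transitions, encode, topsym, applyOp, List.replicate_succ]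
  | start =>
    refine .eps (op := .push2 []) ?_ ?_ <;>
      simp [ipda, transitions, encode, topsym, applyOp]
  | read =>
    refine .read (op := .pop1) ?_ ?_ <;>
      simp [ipda, transitions, encode, topsym, applyOp]
  | popCounter =>
    refine .eps (op := .pop2) ?_ ?_ <;>
      simp [ipda, transitions, encode, topsym, applyOp, List.replicate_succ]
  | @expand A =>
    refine .eps (op := .push1 ((σ A).map some)) ?_ ?_ <;>
      simp [ipda, transitions, encode, topsym, applyOp]

theorem move_of_step {s : Phase} {u : List β} {L : List (α × ℕ)}
    {d : Config Phase β (Option α)}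
    (h : (ipda σ f a).Step (s, u, encode L) d) :
    ∃ c', d = encodeConfig c' ∧ Move σ f (s, u, L) c' := by
  rcases L with _ | ⟨⟨A, _ | j⟩, L⟩ <;> cases s <;>
    rcases h with ⟨hmem, happ⟩ | ⟨hmem, happ⟩ <;>
    simp [ipda, transitions, encode, topsym] at hmem
  all_goals
    casesm* _ ∨ _, _ ∧ _ <;> subst_vars <;>
    simp only [encode, applyOp, List.map_cons, List.replicate_succ, Option.some.injEq] at happ <;>
    subst_vars <;>
    first
      | exact ⟨_, rfl, .pushCounter⟩
      | exact ⟨_, rfl, .start⟩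
      | exact ⟨_, rfl, .read⟩
      | exact ⟨_, rfl, .popCounter⟩
      | refine ⟨_, ?_, .expand⟩; simp [encodeConfig, encode, List.replicate_succ]

theorem produces_of_steps {d : Config Phase β (Option α)} {q : Phase}
    (h : (ipda σ f a).Steps d (q, [], [])) (c : Phase × List β × List (α × ℕ))
    (hc : d = encodeConfig c) : Produces σ f c := by
  induction h using ReflTransGen.head_induction_on generalizing c with
  | refl =>
    obtain ⟨s, u, L⟩ := c
    simp only [encodeConfig, Prod.mk.injEq] at hc
    obtain ⟨rfl, rfl, hL⟩ := hc
    obtain rfl : L = [] := encode_injective hL.symm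
    cases q <;> rfl
  | head hstep _ ih =>
    obtain ⟨s, u, L⟩ := c
    subst hc
    obtain ⟨c', rfl, hmove⟩ := move_of_step σ f a hstep
    exact (ih c' rfl).of_move σ f hmove

theorem accepts_iff (u : List β) :
    (ipda σ f a).Accepts u ↔ ∃ k, u = ((·.flatMap σ)^[k] [a]).map f := by
  constructor
  · rintro ⟨q, h⟩
    simpa [Produces] using produces_of_steps σ f a h (.count, u, [(a, 0)]) rfl
  · rintro ⟨k, rfl⟩
    have hmoves := (moves_count σ f a _ [] k).trans
      (.head .start (by simpa using moves_run_entry σ f k a [] []))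
    exact ⟨.run, ReflTransGen.lift encodeConfig (fun _ _ => step_of_move σ f a) _ _ hmoves⟩

end Simulation

end SubstIPDA

/-- For each letter `γ ∈ {O, H, C, T}`, there exists a 2-iterated pushdown automaton
with input alphabet `{o, h, c, t}` that accepts a word `u` if and only if
`u = ψ(τ^k(γ))` for some `k : ℕ` — the level words read on the border of the
`k`-truncated `γ`-sectors of the dodecagrid, the tiling `{5,3,4}` of hyperbolic
3-space. -/
theorem exists_ipda2_dodecagrid_sector_words (γ : OHCT) :
    ∃ (Q Γ : Type) (_ : Fintype Q) (_ : Fintype Γ) (M : IPDA2 Q ohct Γ),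
      ∀ u : List ohct,
        M.Accepts u ↔ ∃ k : ℕ, u = (tauWord^[k] [γ]).map psi :=
  ⟨_, _, inferInstance, inferInstance, SubstIPDA.ipda tauLetter psi γ,
    SubstIPDA.accepts_iff tauLetter psi γ⟩
end
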